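/- Let r ≥ 3 be an odd integer and let j be a natural number with 0 ≤ j ≤ r−2. Then (−1)^j · sin(π(j+1)(r−1)/r) = sin(π(j+1)/r); consequently (−1)^j · [((r−1)/2)(j+1)] = sin(π(j+1)/r)/sin(2π/r) > 0, i.e., the Hopf-link pairing H((r−3)/2, j) = (−1)^{(r−3)/2 + j}[((r−1)/2)(j+1)] has, up to the fixed global sign (−1)^{(r−3)/2}, constant strictly positive sign as j ranges over 0,…,r−2. -/

import Mathlib

open Real

/-! Since `r` is odd, `2 · ((r - 1)/2) · (j + 1) / r = (j + 1)(r - 1)/r`, so the quantum integer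
has numerator `sin((j + 1)π - π(j + 1)/r) = (-1)^j sin(π(j + 1)/r)`, and both sines left are
positive because `0 < π(j + 1)/r, 2π/r < π`. -/

/-- The quantum integer `[n] = sin(2πn/r)/sin(2π/r)` at `q = exp(2πi/r)`. -/
noncomputable def qint (r n : ℕ) : ℝ :=
  Real.sin (2 * Real.pi * n / r) / Real.sin (2 * Real.pi / r)

theorem neg_one_pow_mul_sin_succ_mul_pi_sub (j : ℕ) (x : ℝ) :
    (-1 : ℝ) ^ j * sin ((j + 1 : ℕ) * π - x) = sin x := by
  rw [sin_nat_mul_pi_sub, pow_succ]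
  linear_combination (sin x) * (Even.neg_one_pow ⟨j, rfl⟩ : (-1 : ℝ) ^ (j + j) = 1)

theorem neg_one_pow_mul_sin_pi_mul_succ_mul_pred_div {r : ℝ} (hr : r ≠ 0) (j : ℕ) :
    (-1 : ℝ) ^ j * sin (π * (j + 1) * (r - 1) / r) = sin (π * (j + 1) / r) := by
  have harg : π * (j + 1) * (r - 1) / r = (j + 1 : ℕ) * π - π * (j + 1) / r := by
    push_cast
    field_simp
  rw [harg, neg_one_pow_mul_sin_succ_mul_pi_sub]

theorem qint_half_pred_mul {r : ℕ} (hodd : Odd r) (m : ℕ) :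
    qint r ((r - 1) / 2 * m) = sin (π * m * (r - 1) / r) / sin (2 * π / r) := by
  obtain ⟨k, rfl⟩ := hodd
  have hk : (2 * k + 1 - 1) / 2 = k := by omega
  simp only [qint, hk]
  push_cast
  ring_nf

theorem sin_pi_mul_div_pos {r a : ℝ} (ha : 0 < a) (har : a < r) : 0 < sin (π * a / r) :=
  sin_pos_of_pos_of_lt_pi (div_pos (mul_pos pi_pos ha) (ha.trans har)) <| by
    rw [div_lt_iff₀ (ha.trans har)]
    exact mul_lt_mul_of_pos_left har pi_pos

/-- for odd `r ≥ 3` and `0 ≤ j ≤ r − 2`,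
`(−1)^j sin(π(j+1)(r−1)/r) = sin(π(j+1)/r)`; consequently
`(−1)^j [((r−1)/2)(j+1)] = sin(π(j+1)/r)/sin(2π/r) > 0`: the Hopf-link pairing
`H((r−3)/2, j)` has, up to the fixed global sign `(−1)^{(r−3)/2}`, constant strictly
positive sign as `j` ranges over `0,…,r−2`. -/
theorem hopf_pairing_sign_pos (r : ℕ) (hr : 3 ≤ r) (hodd : Odd r)
    (j : ℕ) (hj : j ≤ r - 2) :
    (-1 : ℝ) ^ j * Real.sin (Real.pi * (j + 1) * (r - 1) / r) =
        Real.sin (Real.pi * (j + 1) / r) ∧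
    (-1 : ℝ) ^ j * qint r (((r - 1) / 2) * (j + 1)) =
        Real.sin (Real.pi * (j + 1) / r) / Real.sin (2 * Real.pi / r) ∧
    0 < (-1 : ℝ) ^ j * qint r (((r - 1) / 2) * (j + 1)) := by
  have hsin := neg_one_pow_mul_sin_pi_mul_succ_mul_pred_div (r := r) (by positivity) j
  have hqint : (-1 : ℝ) ^ j * qint r (((r - 1) / 2) * (j + 1)) =
      sin (π * (j + 1) / r) / sin (2 * π / r) := by
    rw [qint_half_pred_mul hodd, mul_div_assoc', ← hsin]
    push_cast
    ring_nf
  have hnum : 0 < sin (π * (j + 1) / r) :=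
    sin_pi_mul_div_pos (by positivity) (by exact_mod_cast (by omega : j + 1 < r))
  have hden : 0 < sin (2 * π / r) := by
    rw [mul_comm]
    exact_mod_cast sin_pi_mul_div_pos two_pos (by exact_mod_cast (by omega : 2 < r))
  exact ⟨hsin, hqint, hqint ▸ div_pos hnum hden⟩
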